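/- arXiv:1206.4072 — 2 statements merged into one kernel-verified Lean document; each statement's English description precedes it below -/
import Mathlib

section
/- Let f : I → ℝ³ be a unit speed timelike curve on S²₁ and h_u(v) = ⟪f(v), u⟫. For any v ∈ I and u ∈ ℝ³ with ⟪u,u⟫ = 1: h_u'(v) = h_u''(v) = h_u'''(v) = 0 hold simultaneously if and only if u = ±(κ_g(v)f(v) − s(v))/√(κ_g(v)² + 1) and κ_g'(v) = 0. -/
noncomputable section

/-- Minkowski inner product ⟪x,y⟫ = x₁y₁ + x₂y₂ − x₃y₃ on ℝ³. -/
def mdot (x y : Fin 3 → ℝ) : ℝ := x 0 * y 0 + x 1 * y 1 - x 2 * y 2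

/-- Lorentzian cross product x ×ₗ y. -/
def lcross (x y : Fin 3 → ℝ) : Fin 3 → ℝ :=
  ![x 1 * y 2 - x 2 * y 1, x 2 * y 0 - x 0 * y 2, x 1 * y 0 - x 0 * y 1]

/-- Determinant of the 3×3 matrix with rows x, y, z. -/
def det3 (x y z : Fin 3 → ℝ) : ℝ :=
  x 0 * (y 1 * z 2 - y 2 * z 1) - x 1 * (y 0 * z 2 - y 2 * z 0) + x 2 * (y 0 * z 1 - y 1 * z 0)

/-- Minkowski norm ‖x‖ = √|⟪x,x⟫|. -/
def mnorm (x : Fin 3 → ℝ) : ℝ := Real.sqrt |mdot x x|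

lemma lc0 (x y : Fin 3 → ℝ) : lcross x y 0 = x 1 * y 2 - x 2 * y 1 := rfl
lemma lc1 (x y : Fin 3 → ℝ) : lcross x y 1 = x 2 * y 0 - x 0 * y 2 := rfl
lemma lc2 (x y : Fin 3 → ℝ) : lcross x y 2 = x 1 * y 0 - x 0 * y 1 := rfl

lemma core_fwd (F0 F1 F2 T0 T1 T2 A0 A1 A2 B0 B1 B2 U0 U1 U2 k r : ℝ)
    (c1 : F0*F0 + F1*F1 - F2*F2 = 1)
    (c2 : T0*T0 + T1*T1 - T2*T2 = -1)
    (c3 : F0*T0 + F1*T1 - F2*T2 = 0)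
    (c4 : F0*A0 + F1*A1 - F2*A2 = 1)
    (c5 : T0*A0 + T1*A1 - T2*A2 = 0)
    (c6 : F0*B0 + F1*B1 - F2*B2 = 0)
    (hU : U0*U0 + U1*U1 - U2*U2 = 1)
    (hk : k = F0*(T1*A2 - T2*A1) - F1*(T0*A2 - T2*A0) + F2*(T0*A1 - T1*A0))
    (hr0 : 0 < r) (hr2 : r ^ 2 = k ^ 2 + 1)
    (e1 : T0*U0 + T1*U1 - T2*U2 = 0)
    (e2 : A0*U0 + A1*U1 - A2*U2 = 0)
    (e3 : B0*U0 + B1*U1 - B2*U2 = 0) :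
    ((U0 = r⁻¹ * (k * F0 - (F1*T2 - F2*T1)) ∧ U1 = r⁻¹ * (k * F1 - (F2*T0 - F0*T2)) ∧ U2 = r⁻¹ * (k * F2 - (F1*T0 - F0*T1))) ∨
      (U0 = -(r⁻¹ * (k * F0 - (F1*T2 - F2*T1))) ∧ U1 = -(r⁻¹ * (k * F1 - (F2*T0 - F0*T2))) ∧ U2 = -(r⁻¹ * (k * F2 - (F1*T0 - F0*T1))))) ∧
    F0*(T1*B2 - T2*B1) - F1*(T0*B2 - T2*B0) + F2*(T0*B1 - T1*B0) = 0 := by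
  obtain ⟨av, hav⟩ : ∃ x, x = F0*U0 + F1*U1 - F2*U2 := ⟨_, rfl⟩
  obtain ⟨bv, hbv⟩ : ∃ x, x = T0*U0 + T1*U1 - T2*U2 := ⟨_, rfl⟩
  obtain ⟨cv, hcv⟩ : ∃ x, x = (F1*T2 - F2*T1)*U0 + (F2*T0 - F0*T2)*U1 - (F1*T0 - F0*T1)*U2 := ⟨_, rfl⟩
  have hdet : F0*(T1*(F1*T0 - F0*T1) - T2*(F2*T0 - F0*T2)) - F1*(T0*(F1*T0 - F0*T1) - T2*(F1*T2 - F2*T1)) + F2*(T0*(F2*T0 - F0*T2) - T1*(F1*T2 - F2*T1)) = 1 := by linear_combination ((F0*T0 + F1*T1 - F2*T2)) * c3 + (-(T0*T0 + T1*T1 - T2*T2)) * c1 + (-1) * c2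
  have G1 : F0*(U0 - (av*F0 - bv*T0 + cv*(F1*T2 - F2*T1))) + F1*(U1 - (av*F1 - bv*T1 + cv*(F2*T0 - F0*T2))) - F2*(U2 - (av*F2 - bv*T2 + cv*(F1*T0 - F0*T1))) = 0 := by linear_combination (-1) * hav + (-av) * c1 + (bv) * c3
  have G2 : T0*(U0 - (av*F0 - bv*T0 + cv*(F1*T2 - F2*T1))) + T1*(U1 - (av*F1 - bv*T1 + cv*(F2*T0 - F0*T2))) - T2*(U2 - (av*F2 - bv*T2 + cv*(F1*T0 - F0*T1))) = 0 := by linear_combination (-1) * hbv + (-av) * c3 + (bv) * c2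
  have G3 : (F1*T2 - F2*T1)*(U0 - (av*F0 - bv*T0 + cv*(F1*T2 - F2*T1))) + (F2*T0 - F0*T2)*(U1 - (av*F1 - bv*T1 + cv*(F2*T0 - F0*T2))) - (F1*T0 - F0*T1)*(U2 - (av*F2 - bv*T2 + cv*(F1*T0 - F0*T1))) = 0 := by linear_combination (-1) * hcv + (-cv*(F0*T0 + F1*T1 - F2*T2)) * c3 + (cv*(T0*T0 + T1*T1 - T2*T2)) * c1 + (cv) * c2
  have exp0 : U0 = av*F0 - bv*T0 + cv*(F1*T2 - F2*T1) := by linear_combination ((T1*(F1*T0 - F0*T1) - T2*(F2*T0 - F0*T2))) * G1 + (-(F1*(F1*T0 - F0*T1) - F2*(F2*T0 - F0*T2))) * G2 + ((F1*T2 - F2*T1)) * G3 + (-(U0 - (av*F0 - bv*T0 + cv*(F1*T2 - F2*T1)))) * hdet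
  have exp1 : U1 = av*F1 - bv*T1 + cv*(F2*T0 - F0*T2) := by linear_combination (-(T0*(F1*T0 - F0*T1) - T2*(F1*T2 - F2*T1))) * G1 + ((F0*(F1*T0 - F0*T1) - F2*(F1*T2 - F2*T1))) * G2 + (-(F0*T2 - F2*T0)) * G3 + (-(U1 - (av*F1 - bv*T1 + cv*(F2*T0 - F0*T2)))) * hdet
  have exp2 : U2 = av*F2 - bv*T2 + cv*(F1*T0 - F0*T1) := by linear_combination (-(T0*(F2*T0 - F0*T2) - T1*(F1*T2 - F2*T1))) * G1 + ((F0*(F2*T0 - F0*T2) - F1*(F1*T2 - F2*T1))) * G2 + (-(F0*T1 - F1*T0)) * G3 + (-(U2 - (av*F2 - bv*T2 + cv*(F1*T0 - F0*T1)))) * hdet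
  have hac : av + cv*k = 0 := by linear_combination (1) * e2 + (-A0) * exp0 + (-A1) * exp1 + (A2) * exp2 + (-av) * c4 + (bv) * c5 + (cv) * hk
  have hb0 : bv = 0 := by linear_combination (1) * hbv + (1) * e1
  have hckp : cv*(F0*(T1*B2 - T2*B1) - F1*(T0*B2 - T2*B0) + F2*(T0*B1 - T1*B0)) = 0 := by linear_combination (1) * e3 + (-B0) * exp0 + (-B1) * exp1 + (B2) * exp2 + (-av) * c6 + ((B0*T0 + B1*T1 - B2*T2)) * hb0
  have hE : av^2 - bv^2 + cv^2 = 1 := by linear_combination (1) * hU + (-U0) * exp0 + (-U1) * exp1 + (U2) * exp2 + (av) * hav + (-bv) * hbv + (cv) * hcv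
  have hc2 : cv^2 * r^2 = 1 := by linear_combination (1) * hE + ((cv*k - av)) * hac + (bv) * hb0 + (cv^2) * hr2
  have hrne : r ≠ 0 := ne_of_gt hr0
  have hcne : cv ≠ 0 := by
    intro h0
    rw [h0] at hc2
    norm_num at hc2
  have hKp : F0*(T1*B2 - T2*B1) - F1*(T0*B2 - T2*B0) + F2*(T0*B1 - T1*B0) = 0 := by
    rcases mul_eq_zero.mp hckp with hX | hX
    · exact absurd hX hcne
    · exact hX
  have hfac : (cv * r - 1) * (cv * r + 1) = 0 := by linear_combination hc2
  refine ⟨?_, hKp⟩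
  rcases mul_eq_zero.mp hfac with hcr | hcr
  · have hcval : cv = r⁻¹ := by field_simp; linarith
    right
    refine ⟨?_, ?_, ?_⟩
    · linear_combination (1) * exp0 + (F0) * hac + ((F1*T2 - F2*T1) - k * F0) * hcval + (-T0) * hb0
    · linear_combination (1) * exp1 + (F1) * hac + ((F2*T0 - F0*T2) - k * F1) * hcval + (-T1) * hb0
    · linear_combination (1) * exp2 + (F2) * hac + ((F1*T0 - F0*T1) - k * F2) * hcval + (-T2) * hb0
  · have hcval : cv = -r⁻¹ := by field_simp; linarith
    left
    refine ⟨?_, ?_, ?_⟩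
    · linear_combination (1) * exp0 + (F0) * hac + ((F1*T2 - F2*T1) - k * F0) * hcval + (-T0) * hb0
    · linear_combination (1) * exp1 + (F1) * hac + ((F2*T0 - F0*T2) - k * F1) * hcval + (-T1) * hb0
    · linear_combination (1) * exp2 + (F2) * hac + ((F1*T0 - F0*T1) - k * F2) * hcval + (-T2) * hb0

lemma core_bwd (F0 F1 F2 T0 T1 T2 A0 A1 A2 B0 B1 B2 U0 U1 U2 k r : ℝ)
    (c3 : F0*T0 + F1*T1 - F2*T2 = 0)
    (c4 : F0*A0 + F1*A1 - F2*A2 = 1)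
    (c6 : F0*B0 + F1*B1 - F2*B2 = 0)
    (hk : k = F0*(T1*A2 - T2*A1) - F1*(T0*A2 - T2*A0) + F2*(T0*A1 - T1*A0))
    (hB : F0*(T1*B2 - T2*B1) - F1*(T0*B2 - T2*B0) + F2*(T0*B1 - T1*B0) = 0)
    (hUs : (U0 = r⁻¹ * (k * F0 - (F1*T2 - F2*T1)) ∧ U1 = r⁻¹ * (k * F1 - (F2*T0 - F0*T2)) ∧ U2 = r⁻¹ * (k * F2 - (F1*T0 - F0*T1))) ∨
      (U0 = -(r⁻¹ * (k * F0 - (F1*T2 - F2*T1))) ∧ U1 = -(r⁻¹ * (k * F1 - (F2*T0 - F0*T2))) ∧ U2 = -(r⁻¹ * (k * F2 - (F1*T0 - F0*T1))))) :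
    T0*U0 + T1*U1 - T2*U2 = 0 ∧ A0*U0 + A1*U1 - A2*U2 = 0 ∧ B0*U0 + B1*U1 - B2*U2 = 0 := by
  rcases hUs with ⟨hU0, hU1, hU2⟩ | ⟨hU0, hU1, hU2⟩
  · refine ⟨?_, ?_, ?_⟩
    · linear_combination (T0) * hU0 + (T1) * hU1 + (-T2) * hU2 + ((1) * r⁻¹ * k) * c3
    · linear_combination (A0) * hU0 + (A1) * hU1 + (-A2) * hU2 + ((1) * r⁻¹ * k) * c4 + ((1) * r⁻¹) * hk
    · linear_combination (B0) * hU0 + (B1) * hU1 + (-B2) * hU2 + ((1) * r⁻¹ * k) * c6 + (-(1) * r⁻¹) * hB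
  · refine ⟨?_, ?_, ?_⟩
    · linear_combination (T0) * hU0 + (T1) * hU1 + (-T2) * hU2 + ((-1) * r⁻¹ * k) * c3
    · linear_combination (A0) * hU0 + (A1) * hU1 + (-A2) * hU2 + ((-1) * r⁻¹ * k) * c4 + ((-1) * r⁻¹) * hk
    · linear_combination (B0) * hU0 + (B1) * hU1 + (-B2) * hU2 + ((-1) * r⁻¹ * k) * c6 + (-(-1) * r⁻¹) * hB

lemma key_alg (F T A B U : Fin 3 → ℝ) (k r : ℝ)
    (c1 : mdot F F = 1) (c2 : mdot T T = -1) (c3 : mdot F T = 0)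
    (c4 : mdot F A = 1) (c5 : mdot T A = 0) (c6 : mdot F B = 0)
    (hU : mdot U U = 1) (hk : k = det3 F T A) (hr : r = Real.sqrt (k ^ 2 + 1)) :
    (mdot T U = 0 ∧ mdot A U = 0 ∧ mdot B U = 0) ↔
      ((U = r⁻¹ • (k • F - lcross F T) ∨ U = -(r⁻¹ • (k • F - lcross F T))) ∧
        det3 F T B = 0) := by
  have hr0 : 0 < r := by
    rw [hr]; exact Real.sqrt_pos.2 (by positivity)
  have hr2 : r ^ 2 = k ^ 2 + 1 := by
    rw [hr]; exact Real.sq_sqrt (by positivity)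
  simp only [mdot] at c1 c2 c3 c4 c5 c6 hU
  simp only [det3] at hk
  constructor
  · rintro ⟨e1, e2, e3⟩
    simp only [mdot] at e1 e2 e3
    obtain ⟨hd, hB⟩ := core_fwd (F 0) (F 1) (F 2) (T 0) (T 1) (T 2) (A 0) (A 1) (A 2)
      (B 0) (B 1) (B 2) (U 0) (U 1) (U 2) k r c1 c2 c3 c4 c5 c6 hU hk hr0 hr2 e1 e2 e3
    refine ⟨?_, hB⟩
    rcases hd with ⟨h0, h1, h2⟩ | ⟨h0, h1, h2⟩
    · left
      funext i
      fin_cases i <;>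
        simp only [Pi.smul_apply, Pi.sub_apply, smul_eq_mul, lc0, lc1, lc2, Fin.isValue,
          Fin.zero_eta, Fin.mk_one]
      · exact h0
      · exact h1
      · exact h2
    · right
      funext i
      fin_cases i <;>
        simp only [Pi.neg_apply, Pi.smul_apply, Pi.sub_apply, smul_eq_mul, lc0, lc1, lc2,
          Fin.isValue, Fin.zero_eta, Fin.mk_one]
      · exact h0
      · exact h1
      · exact h2
  · rintro ⟨hd, hB⟩
    have hB' : F 0 * (T 1 * B 2 - T 2 * B 1) - F 1 * (T 0 * B 2 - T 2 * B 0) +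
        F 2 * (T 0 * B 1 - T 1 * B 0) = 0 := hB
    have hUs : (U 0 = r⁻¹ * (k * F 0 - (F 1 * T 2 - F 2 * T 1)) ∧
          U 1 = r⁻¹ * (k * F 1 - (F 2 * T 0 - F 0 * T 2)) ∧
          U 2 = r⁻¹ * (k * F 2 - (F 1 * T 0 - F 0 * T 1))) ∨
        (U 0 = -(r⁻¹ * (k * F 0 - (F 1 * T 2 - F 2 * T 1))) ∧
          U 1 = -(r⁻¹ * (k * F 1 - (F 2 * T 0 - F 0 * T 2))) ∧
          U 2 = -(r⁻¹ * (k * F 2 - (F 1 * T 0 - F 0 * T 1)))) := by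
      rcases hd with hEq | hEq
      · left
        refine ⟨?_, ?_, ?_⟩
        · have := congrFun hEq 0
          simpa only [Pi.smul_apply, Pi.sub_apply, smul_eq_mul, lc0] using this
        · have := congrFun hEq 1
          simpa only [Pi.smul_apply, Pi.sub_apply, smul_eq_mul, lc1] using this
        · have := congrFun hEq 2
          simpa only [Pi.smul_apply, Pi.sub_apply, smul_eq_mul, lc2] using this
      · right
        refine ⟨?_, ?_, ?_⟩
        · have := congrFun hEq 0
          simpa only [Pi.neg_apply, Pi.smul_apply, Pi.sub_apply, smul_eq_mul, lc0] using this
        · have := congrFun hEq 1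
          simpa only [Pi.neg_apply, Pi.smul_apply, Pi.sub_apply, smul_eq_mul, lc1] using this
        · have := congrFun hEq 2
          simpa only [Pi.neg_apply, Pi.smul_apply, Pi.sub_apply, smul_eq_mul, lc2] using this
    obtain ⟨e1, e2, e3⟩ := core_bwd (F 0) (F 1) (F 2) (T 0) (T 1) (T 2) (A 0) (A 1) (A 2)
      (B 0) (B 1) (B 2) (U 0) (U 1) (U 2) k r c3 c4 c6 hk hB' hUs
    exact ⟨e1, e2, e3⟩

lemma hasDerivAt_mdot {g q : ℝ → Fin 3 → ℝ} {g' q' : Fin 3 → ℝ} {v : ℝ}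
    (hg : HasDerivAt g g' v) (hq : HasDerivAt q q' v) :
    HasDerivAt (fun w => mdot (g w) (q w)) (mdot g' (q v) + mdot (g v) q') v := by
  have g0 := hasDerivAt_pi.1 hg 0
  have g1 := hasDerivAt_pi.1 hg 1
  have g2 := hasDerivAt_pi.1 hg 2
  have q0 := hasDerivAt_pi.1 hq 0
  have q1 := hasDerivAt_pi.1 hq 1
  have q2 := hasDerivAt_pi.1 hq 2
  have H := ((g0.mul q0).add (g1.mul q1)).sub (g2.mul q2)
  convert H using 1
  all_goals try simp only [mdot]
  all_goals try rfl
  ring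

lemma hasDerivAt_mdot_const {g : ℝ → Fin 3 → ℝ} {g' u : Fin 3 → ℝ} {v : ℝ}
    (hg : HasDerivAt g g' v) :
    HasDerivAt (fun w => mdot (g w) u) (mdot g' u) v := by
  have H := hasDerivAt_mdot hg (hasDerivAt_const v u)
  convert H using 1
  simp [mdot]

lemma hasDerivAt_det3 {x y z : ℝ → Fin 3 → ℝ} {x' y' z' : Fin 3 → ℝ} {v : ℝ}
    (hx : HasDerivAt x x' v) (hy : HasDerivAt y y' v) (hz : HasDerivAt z z' v) :
    HasDerivAt (fun w => det3 (x w) (y w) (z w))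
      (det3 x' (y v) (z v) + det3 (x v) y' (z v) + det3 (x v) (y v) z') v := by
  have x0 := hasDerivAt_pi.1 hx 0
  have x1 := hasDerivAt_pi.1 hx 1
  have x2 := hasDerivAt_pi.1 hx 2
  have y0 := hasDerivAt_pi.1 hy 0
  have y1 := hasDerivAt_pi.1 hy 1
  have y2 := hasDerivAt_pi.1 hy 2
  have z0 := hasDerivAt_pi.1 hz 0
  have z1 := hasDerivAt_pi.1 hz 1
  have z2 := hasDerivAt_pi.1 hz 2
  have H := ((x0.mul ((y1.mul z2).sub (y2.mul z1))).sub
      (x1.mul ((y0.mul z2).sub (y2.mul z0)))).add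
      (x2.mul ((y0.mul z1).sub (y1.mul z0)))
  convert H using 1
  all_goals try simp only [det3, Pi.mul_apply, Pi.sub_apply]
  all_goals try rfl
  ring

/-- For a unit speed timelike curve f on S²₁ and u ∈ S²₁, h_u'(v) = h_u''(v) = h_u'''(v) = 0
iff u = ±(κ_g(v)f(v) − s(v))/√(κ_g(v)² + 1) and κ_g'(v) = 0. -/
theorem stmt_4 (a b : ℝ) (f : ℝ → Fin 3 → ℝ)
    (hf : ContDiffOn ℝ (⊤ : ℕ∞) f (Set.Ioo a b))
    (hsph : ∀ v ∈ Set.Ioo a b, mdot (f v) (f v) = 1)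
    (htl : ∀ v ∈ Set.Ioo a b, mdot (deriv f v) (deriv f v) = -1)
    (t s : ℝ → Fin 3 → ℝ) (kg : ℝ → ℝ)
    (ht : t = fun w => deriv f w)
    (hs : s = fun w => lcross (f w) (t w))
    (hkg : kg = fun w => det3 (f w) (t w) (deriv t w))
    (u : Fin 3 → ℝ) (hu : mdot u u = 1)
    (h : ℝ → ℝ) (hh : h = fun w => mdot (f w) u) :
    ∀ v ∈ Set.Ioo a b,
      ((deriv h v = 0 ∧ deriv (deriv h) v = 0 ∧ deriv (deriv (deriv h)) v = 0) ↔
        ((u = (Real.sqrt (kg v ^ 2 + 1))⁻¹ • (kg v • f v - s v) ∨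
          u = -((Real.sqrt (kg v ^ 2 + 1))⁻¹ • (kg v • f v - s v))) ∧
         deriv kg v = 0)) := by
  intro v hv
  have hO : IsOpen (Set.Ioo a b) := isOpen_Ioo
  have hf1 : ContDiffOn ℝ (⊤ : ℕ∞) (deriv f) (Set.Ioo a b) :=
    hf.deriv_of_isOpen hO (by simp)
  have hf2 : ContDiffOn ℝ (⊤ : ℕ∞) (deriv (deriv f)) (Set.Ioo a b) :=
    hf1.deriv_of_isOpen hO (by simp)
  have hD : ∀ (g : ℝ → Fin 3 → ℝ), ContDiffOn ℝ (⊤ : ℕ∞) g (Set.Ioo a b) →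
      ∀ w ∈ Set.Ioo a b, HasDerivAt g (deriv g w) w := fun g hg w hw =>
    ((hg.differentiableOn (by simp)).differentiableAt (hO.mem_nhds hw)).hasDerivAt
  -- first derivative of h
  have Hh : ∀ w ∈ Set.Ioo a b, HasDerivAt h (mdot (deriv f w) u) w := by
    intro w hw
    rw [hh]
    exact hasDerivAt_mdot_const (hD f hf w hw)
  have E1 : ∀ w ∈ Set.Ioo a b, deriv h w = mdot (deriv f w) u := fun w hw => (Hh w hw).deriv
  have E2 : ∀ w ∈ Set.Ioo a b, deriv (deriv h) w = mdot (deriv (deriv f) w) u := by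
    intro w hw
    have hev : deriv h =ᶠ[nhds w] fun z => mdot (deriv f z) u :=
      Filter.eventuallyEq_of_mem (hO.mem_nhds hw) fun z hz => E1 z hz
    rw [hev.deriv_eq]
    exact (hasDerivAt_mdot_const (hD _ hf1 w hw)).deriv
  have E3 : deriv (deriv (deriv h)) v = mdot (deriv (deriv (deriv f)) v) u := by
    have hev : deriv (deriv h) =ᶠ[nhds v] fun z => mdot (deriv (deriv f) z) u :=
      Filter.eventuallyEq_of_mem (hO.mem_nhds hv) fun z hz => E2 z hz
    rw [hev.deriv_eq]
    exact (hasDerivAt_mdot_const (hD _ hf2 v hv)).deriv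
  -- constraints
  have c3O : ∀ w ∈ Set.Ioo a b, mdot (f w) (deriv f w) = 0 := by
    intro w hw
    have hconst : deriv (fun z => mdot (f z) (f z)) w = 0 := by
      have hev : (fun z => mdot (f z) (f z)) =ᶠ[nhds w] fun _ => (1 : ℝ) :=
        Filter.eventuallyEq_of_mem (hO.mem_nhds hw) fun z hz => hsph z hz
      rw [hev.deriv_eq]
      exact deriv_const _ _
    have H := (hasDerivAt_mdot (hD f hf w hw) (hD f hf w hw)).deriv
    rw [hconst] at H
    simp only [mdot] at H ⊢
    linarith [H]
  have c4O : ∀ w ∈ Set.Ioo a b, mdot (f w) (deriv (deriv f) w) = 1 := by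
    intro w hw
    have hconst : deriv (fun z => mdot (f z) (deriv f z)) w = 0 := by
      have hev : (fun z => mdot (f z) (deriv f z)) =ᶠ[nhds w] fun _ => (0 : ℝ) :=
        Filter.eventuallyEq_of_mem (hO.mem_nhds hw) fun z hz => c3O z hz
      rw [hev.deriv_eq]
      exact deriv_const _ _
    have H := (hasDerivAt_mdot (hD f hf w hw) (hD _ hf1 w hw)).deriv
    rw [hconst] at H
    have htlw := htl w hw
    simp only [mdot] at H htlw ⊢
    linarith [H, htlw]
  have c5O : ∀ w ∈ Set.Ioo a b, mdot (deriv f w) (deriv (deriv f) w) = 0 := by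
    intro w hw
    have hconst : deriv (fun z => mdot (deriv f z) (deriv f z)) w = 0 := by
      have hev : (fun z => mdot (deriv f z) (deriv f z)) =ᶠ[nhds w] fun _ => (-1 : ℝ) :=
        Filter.eventuallyEq_of_mem (hO.mem_nhds hw) fun z hz => htl z hz
      rw [hev.deriv_eq]
      exact deriv_const _ _
    have H := (hasDerivAt_mdot (hD _ hf1 w hw) (hD _ hf1 w hw)).deriv
    rw [hconst] at H
    simp only [mdot] at H ⊢
    linarith [H]
  have c6v : mdot (f v) (deriv (deriv (deriv f)) v) = 0 := by
    have hconst : deriv (fun z => mdot (f z) (deriv (deriv f) z)) v = 0 := by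
      have hev : (fun z => mdot (f z) (deriv (deriv f) z)) =ᶠ[nhds v] fun _ => (1 : ℝ) :=
        Filter.eventuallyEq_of_mem (hO.mem_nhds hv) fun z hz => c4O z hz
      rw [hev.deriv_eq]
      exact deriv_const _ _
    have H := (hasDerivAt_mdot (hD f hf v hv) (hD _ hf2 v hv)).deriv
    rw [hconst] at H
    have h5 := c5O v hv
    simp only [mdot] at H h5 ⊢
    linarith [H, h5]
  -- kg and its derivative
  have e_kg : kg v = det3 (f v) (deriv f v) (deriv (deriv f) v) := by
    rw [hkg, ht]
  have e_kgd : deriv kg v = det3 (f v) (deriv f v) (deriv (deriv (deriv f)) v) := by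
    have Hkg : HasDerivAt kg (det3 (f v) (deriv f v) (deriv (deriv (deriv f)) v)) v := by
      have H := hasDerivAt_det3 (hD f hf v hv) (hD _ hf1 v hv) (hD _ hf2 v hv)
      rw [hkg, ht]
      convert H using 1
      simp only [det3]
      ring
    exact Hkg.deriv
  have e_s : s v = lcross (f v) (deriv f v) := by
    rw [hs, ht]
  rw [E1 v hv, E2 v hv, E3, e_kg, e_kgd, e_s]
  exact key_alg (f v) (deriv f v) (deriv (deriv f) v) (deriv (deriv (deriv f)) v) u
    (det3 (f v) (deriv f v) (deriv (deriv f) v))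
    (Real.sqrt (det3 (f v) (deriv f v) (deriv (deriv f) v) ^ 2 + 1))
    (hsph v hv) (htl v hv) (c3O v hv) (c4O v hv) (c5O v hv) c6v hu rfl rfl
end
end

section
/- Let f : I → ℝ³ be a unit speed timelike curve on S²₁. Fix v₀ ∈ I and set u₀ = d_f(v₀) = (κ_g(v₀)f(v₀) − s(v₀))/√(κ_g(v₀)² + 1) and r₀ = κ_g(v₀)/√(κ_g(v₀)² + 1). Then the function g(v) = ⟪f(v), u₀⟫ − r₀ satisfies g(v₀) = 0, g'(v₀) = 0 and g''(v₀) = 0; that is, f and the osculating pseudo-circle PS¹(u₀, r₀) have at least a 3-point contact at f(v₀). -/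
noncomputable section

lemma mdot_comm (x y : Fin 3 → ℝ) : mdot x y = mdot y x := by
  simp [mdot]; ring

lemma mdot_lcross_left (x y : Fin 3 → ℝ) : mdot x (lcross x y) = 0 := by
  simp [mdot, lcross]; ring

lemma mdot_lcross_right (x y : Fin 3 → ℝ) : mdot y (lcross x y) = 0 := by
  simp [mdot, lcross]; ring

lemma mdot_lcross_eq_det3 (x y z : Fin 3 → ℝ) : mdot (lcross x y) z = det3 x y z := by
  simp [mdot, lcross, det3]; ring

lemma mdot_smul_sub (x y z : Fin 3 → ℝ) (c k : ℝ) :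
    mdot x (c • (k • y - z)) = c * (k * mdot x y - mdot x z) := by
  simp [mdot, Pi.smul_apply, Pi.sub_apply, smul_eq_mul]; ring

/-- Product rule for `mdot` of two curves. -/
lemma hasDerivAt_mdot_s8 {x y : ℝ → Fin 3 → ℝ} {x' y' : Fin 3 → ℝ} {v : ℝ}
    (hx : ∀ i, HasDerivAt (fun w => x w i) (x' i) v)
    (hy : ∀ i, HasDerivAt (fun w => y w i) (y' i) v) :
    HasDerivAt (fun w => mdot (x w) (y w)) (mdot x' (y v) + mdot (x v) y') v := by
  have h := (((hx 0).mul (hy 0)).add ((hx 1).mul (hy 1))).sub ((hx 2).mul (hy 2))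
  simp only [mdot]
  convert h using 1
  all_goals first | rfl | ring

lemma hasDerivAt_comp_proj {x : ℝ → Fin 3 → ℝ} {x' : Fin 3 → ℝ} {v : ℝ}
    (h : HasDerivAt x x' v) (i : Fin 3) :
    HasDerivAt (fun w => x w i) (x' i) v := by
  exact ((ContinuousLinearMap.proj (R := ℝ) (φ := fun _ : Fin 3 => ℝ) i).hasFDerivAt.comp_hasDerivAt
    v h)

/-- A unit speed timelike curve f on S²₁ and its osculating pseudo-circle
PS¹(d_f(v₀), κ_g(v₀)/√(κ_g(v₀)²+1)) have at least a 3-point contact at f(v₀):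
g = ⟪f(·), u₀⟫ − r₀ satisfies g(v₀) = g'(v₀) = g''(v₀) = 0. -/
theorem stmt_8 (a b : ℝ) (f : ℝ → Fin 3 → ℝ)
    (hf : ContDiffOn ℝ (⊤ : ℕ∞) f (Set.Ioo a b))
    (hsph : ∀ v ∈ Set.Ioo a b, mdot (f v) (f v) = 1)
    (htl : ∀ v ∈ Set.Ioo a b, mdot (deriv f v) (deriv f v) = -1)
    (t s : ℝ → Fin 3 → ℝ) (kg : ℝ → ℝ)
    (ht : t = fun w => deriv f w)
    (hs : s = fun w => lcross (f w) (t w))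
    (hkg : kg = fun w => det3 (f w) (t w) (deriv t w))
    (v₀ : ℝ) (hv₀ : v₀ ∈ Set.Ioo a b)
    (u₀ : Fin 3 → ℝ)
    (hu₀ : u₀ = (Real.sqrt (kg v₀ ^ 2 + 1))⁻¹ • (kg v₀ • f v₀ - s v₀))
    (r₀ : ℝ) (hr₀ : r₀ = kg v₀ / Real.sqrt (kg v₀ ^ 2 + 1))
    (g : ℝ → ℝ) (hg : g = fun w => mdot (f w) u₀ - r₀) :
    g v₀ = 0 ∧ deriv g v₀ = 0 ∧ deriv (deriv g) v₀ = 0 := by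
  have hopen : IsOpen (Set.Ioo a b) := isOpen_Ioo
  have hmem : Set.Ioo a b ∈ nhds v₀ := hopen.mem_nhds hv₀
  -- c = √(κ₀²+1) ≠ 0
  set c : ℝ := Real.sqrt (kg v₀ ^ 2 + 1) with hc
  have hcpos : 0 < c := Real.sqrt_pos.mpr (by positivity)
  have hcne : c ≠ 0 := ne_of_gt hcpos
  -- f has a derivative at every point of the interval
  have hfd : ∀ v ∈ Set.Ioo a b, HasDerivAt f (t v) v := by
    intro v hv
    have : DifferentiableAt ℝ f v :=
      (hf.contDiffAt (hopen.mem_nhds hv)).differentiableAt (by simp)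
    simpa [ht] using this.hasDerivAt
  -- t is C^∞, hence has a derivative at every point
  have htC : ContDiffOn ℝ (⊤ : ℕ∞) t (Set.Ioo a b) := by
    rw [ht]
    exact hf.deriv_of_isOpen hopen (by simp)
  have htd : ∀ v ∈ Set.Ioo a b, HasDerivAt t (deriv t v) v := by
    intro v hv
    exact ((htC.contDiffAt (hopen.mem_nhds hv)).differentiableAt (by simp)).hasDerivAt
  -- ⟪f, t⟫ = 0 on the interval
  have hft : ∀ v ∈ Set.Ioo a b, mdot (f v) (t v) = 0 := by
    intro v hv
    have h1 : HasDerivAt (fun w => mdot (f w) (f w))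
        (mdot (t v) (f v) + mdot (f v) (t v)) v :=
      hasDerivAt_mdot_s8 (fun i => hasDerivAt_comp_proj (hfd v hv) i)
        (fun i => hasDerivAt_comp_proj (hfd v hv) i)
    have h2 : HasDerivAt (fun w => mdot (f w) (f w)) 0 v := by
      have : (fun w => mdot (f w) (f w)) =ᶠ[nhds v] fun _ => (1 : ℝ) :=
        Filter.eventuallyEq_of_mem (hopen.mem_nhds hv) (fun w hw => hsph w hw)
      exact (hasDerivAt_const v (1 : ℝ)).congr_of_eventuallyEq this
    have h3 := h1.unique h2
    rw [mdot_comm (t v) (f v)] at h3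
    linarith
  -- ⟪f, t'⟫ = 1 at v₀
  have hftp : mdot (f v₀) (deriv t v₀) = 1 := by
    have h1 : HasDerivAt (fun w => mdot (f w) (t w))
        (mdot (t v₀) (t v₀) + mdot (f v₀) (deriv t v₀)) v₀ :=
      hasDerivAt_mdot_s8 (fun i => hasDerivAt_comp_proj (hfd v₀ hv₀) i)
        (fun i => hasDerivAt_comp_proj (htd v₀ hv₀) i)
    have h2 : HasDerivAt (fun w => mdot (f w) (t w)) 0 v₀ := by
      have : (fun w => mdot (f w) (t w)) =ᶠ[nhds v₀] fun _ => (0 : ℝ) :=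
        Filter.eventuallyEq_of_mem hmem (fun w hw => hft w hw)
      exact (hasDerivAt_const v₀ (0 : ℝ)).congr_of_eventuallyEq this
    have h3 := h1.unique h2
    have h4 : mdot (t v₀) (t v₀) = -1 := by
      have := htl v₀ hv₀; simpa [ht] using this
    linarith
  -- derivative of g on the interval
  have hgd : ∀ v ∈ Set.Ioo a b, HasDerivAt g (mdot (t v) u₀) v := by
    intro v hv
    have h1 : HasDerivAt (fun w => mdot (f w) u₀)
        (mdot (t v) u₀ + mdot (f v) 0) v :=
      hasDerivAt_mdot_s8 (fun i => hasDerivAt_comp_proj (hfd v hv) i)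
        (fun i => hasDerivAt_const v (u₀ i))
    have h2 : mdot (f v) 0 = 0 := by simp [mdot]
    rw [hg]
    simpa [h2] using h1.sub_const r₀
  refine ⟨?_, ?_, ?_⟩
  · -- g v₀ = 0
    rw [hg]
    simp only [hu₀, hs, hr₀]
    rw [mdot_smul_sub, hsph v₀ hv₀, mdot_lcross_left]
    field_simp
    ring
  · -- deriv g v₀ = 0
    rw [(hgd v₀ hv₀).deriv, hu₀, hs, mdot_smul_sub]
    rw [mdot_comm (t v₀) (f v₀), hft v₀ hv₀, mdot_lcross_right]
    ring
  · -- second derivative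
    have heq : deriv g =ᶠ[nhds v₀] fun v => mdot (t v) u₀ :=
      Filter.eventuallyEq_of_mem hmem (fun v hv => (hgd v hv).deriv)
    rw [heq.deriv_eq]
    have h1 : HasDerivAt (fun v => mdot (t v) u₀)
        (mdot (deriv t v₀) u₀ + mdot (t v₀) 0) v₀ :=
      hasDerivAt_mdot_s8 (fun i => hasDerivAt_comp_proj (htd v₀ hv₀) i)
        (fun i => hasDerivAt_const v₀ (u₀ i))
    have h2 : mdot (t v₀) 0 = 0 := by simp [mdot]
    rw [h1.deriv, h2, add_zero, hu₀, hs, mdot_smul_sub]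
    rw [mdot_comm (deriv t v₀) (f v₀), hftp]
    rw [mdot_comm (deriv t v₀) (lcross (f v₀) (t v₀)), mdot_lcross_eq_det3]
    rw [hkg]
    ring
end
end
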